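/- arXiv:1201.1119 — 2 statements merged into one kernel-verified Lean document; each statement's English description precedes it below -/
import Mathlib

section
/- The Morse–Thue equation has a unique solution: there is exactly one boolean stream x satisfying x = 1 : merge(x, not(x)), where not is the entrywise negation and merge interleaves two streams. -/
/-!
Both `merge` and `notS` are pinned down by their head/tail equations (a bisimulation argument), so
they are `Stream'.interleave` and `Stream'.map not`. Read off position by position, the equation
then says `x 0 = 1`, `x (2k+1) = x k` and `x (2k+2) = ¬ x k`, which determines `x` by strong
induction; the shifted Thue–Morse sequence `n ↦ t (n+1)`, where `t n` is the parity of the binary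
digit sum of `n`, satisfies these recurrences.
-/

namespace Stream'

variable {α β : Type*}

theorem eq_map_of_head_tail {g : Stream' α → Stream' β} {f : α → β}
    (h : ∀ x, (g x).head = f x.head ∧ (g x).tail = g x.tail) (x : Stream' α) :
    g x = x.map f :=
  eq_of_bisim (fun s t => ∃ x, s = g x ∧ t = x.map f)
    (by rintro _ _ ⟨x, rfl, rfl⟩; exact ⟨(h x).1, x.tail, (h x).2, tail_map f x⟩) ⟨x, rfl, rfl⟩

theorem eq_interleave_of_head_tail {merge : Stream' α → Stream' α → Stream' α}
    (h : ∀ x y, (merge x y).head = x.head ∧ (merge x y).tail = merge y x.tail)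
    (x y : Stream' α) : merge x y = x ⋈ y :=
  eq_of_bisim (fun s t => ∃ x y, s = merge x y ∧ t = x ⋈ y)
    (by
      rintro _ _ ⟨x, y, rfl, rfl⟩
      exact ⟨(h x y).1, y, x.tail, (h x y).2, tail_interleave x y⟩)
    ⟨x, y, rfl, rfl⟩

theorem morseThue_iff (x : Stream' Bool) :
    (x.head = true ∧ x.tail = x ⋈ x.map not) ↔
      x.get 0 = true ∧ ∀ k, x.get (2 * k + 1) = x.get k ∧ x.get (2 * k + 2) = !x.get k := by
  refine and_congr Iff.rfl ⟨fun h k => ?_, fun h => Stream'.ext fun n => ?_⟩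
  · rw [show 2 * k + 2 = 2 * k + 1 + 1 from rfl, get_succ, get_succ, h,
      get_interleave_left, get_interleave_right, get_map]
    exact ⟨rfl, rfl⟩
  · obtain ⟨k, rfl | rfl⟩ := n.even_or_odd'
    · rw [get_interleave_left, ← (h k).1]; rfl
    · rw [get_interleave_right, get_map, ← (h k).2]; rfl

end Stream'

def thueMorse : ℕ → Bool :=
  Nat.evenOddRec false (fun _ b => b) (fun _ b => !b)

@[simp] theorem thueMorse_two_mul (n : ℕ) : thueMorse (2 * n) = thueMorse n :=
  Nat.evenOddRec_even _ _ _ rfl n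

@[simp] theorem thueMorse_two_mul_add_one (n : ℕ) : thueMorse (2 * n + 1) = !thueMorse n :=
  Nat.evenOddRec_odd _ _ _ rfl n

theorem thueMorse_succ_recurrence :
    thueMorse 1 = true ∧ ∀ k, thueMorse (2 * k + 1 + 1) = thueMorse (k + 1) ∧
      thueMorse (2 * k + 2 + 1) = !thueMorse (k + 1) := by
  refine ⟨rfl, fun k => ⟨?_, ?_⟩⟩
  · rw [show 2 * k + 1 + 1 = 2 * (k + 1) by ring, thueMorse_two_mul]
  · rw [show 2 * k + 2 + 1 = 2 * (k + 1) + 1 by ring, thueMorse_two_mul_add_one]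

theorem get_eq_thueMorse_succ {x : Stream' Bool} (h0 : x.get 0 = true)
    (h : ∀ k, x.get (2 * k + 1) = x.get k ∧ x.get (2 * k + 2) = !x.get k) (n : ℕ) :
    x.get n = thueMorse (n + 1) := by
  induction n using Nat.strong_induction_on with
  | _ n ih =>
    obtain _ | m := n
    · exact h0
    obtain ⟨k, rfl | rfl⟩ := m.even_or_odd'
    · rw [(h k).1, ih k (by omega), (thueMorse_succ_recurrence.2 k).1]
    · rw [(h k).2, ih k (by omega), (thueMorse_succ_recurrence.2 k).2]

/-- The Morse–Thue equation x = 1 : merge(x, not x) has a unique solution. -/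
theorem stmt_10 (merge : Stream' Bool → Stream' Bool → Stream' Bool)
    (notS : Stream' Bool → Stream' Bool)
    (hmerge : ∀ x y : Stream' Bool,
      (merge x y).head = x.head ∧ (merge x y).tail = merge y x.tail)
    (hnot : ∀ x : Stream' Bool, (notS x).head = !x.head ∧ (notS x).tail = notS x.tail) :
    ∃! x : Stream' Bool, x.head = true ∧ x.tail = merge x (notS x) := by
  obtain rfl : notS = Stream'.map not := funext (Stream'.eq_map_of_head_tail hnot)
  obtain rfl : merge = (· ⋈ ·) := funext₂ (Stream'.eq_interleave_of_head_tail hmerge)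
  simp only [Stream'.morseThue_iff]
  refine ⟨fun n => thueMorse (n + 1), thueMorse_succ_recurrence, fun x hx => ?_⟩
  exact Stream'.ext (get_eq_thueMorse_succ hx.1 hx.2)
end

section
/- Course-of-value (cumulative) access to the output distinguishes the Morse–Thue stream from simple corecursion with memoryless state over a finite state space: the Morse–Thue sequence t (satisfying t = 1 : merge(t, not t)) is not eventually periodic, hence t cannot be produced by a corecursion f(q) = g₀(q) : f(g₁(q)) over any finite state set Q with t = f(q₀). -/
/-- A stream is eventually periodic if from some point on it repeats with some
positive period. -/
def EventuallyPeriodic (s : Stream' Bool) : Prop :=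
  ∃ N p : ℕ, 1 ≤ p ∧ ∀ n, N ≤ n → s.get (n + p) = s.get n

/-- The Morse–Thue stream t (the unique solution of t = 1 : merge(t, not t)) is
not eventually periodic, hence is not produced by any memoryless corecursion
over a finite state space. -/
theorem stmt_17 (merge : Stream' Bool → Stream' Bool → Stream' Bool)
    (notS : Stream' Bool → Stream' Bool)
    (hmerge : ∀ x y : Stream' Bool,
      (merge x y).head = x.head ∧ (merge x y).tail = merge y x.tail)
    (hnot : ∀ x : Stream' Bool, (notS x).head = !x.head ∧ (notS x).tail = notS x.tail)
    (t : Stream' Bool) (ht : t.head = true ∧ t.tail = merge t (notS t)) :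
    ¬ EventuallyPeriodic t ∧
      ∀ (Q : Type) (_ : Fintype Q) (g₀ : Q → Bool) (g₁ : Q → Q)
        (f : Q → Stream' Bool),
        (∀ q, (f q).head = g₀ q ∧ (f q).tail = f (g₁ q)) →
        ∀ q₀ : Q, f q₀ ≠ t := by
  -- get-level description of notS
  have nget : ∀ n (x : Stream' Bool), (notS x).get n = !x.get n := by
    intro n
    induction n with
    | zero => intro x; exact (hnot x).1
    | succ n ih =>
      intro x
      show (notS x).tail.get n = !x.tail.get n
      rw [(hnot x).2, ih]
  -- get-level description of merge
  have mget : ∀ n (x y : Stream' Bool),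
      (merge x y).get (2*n) = x.get n ∧ (merge x y).get (2*n+1) = y.get n := by
    intro n
    induction n with
    | zero =>
      intro x y
      refine ⟨(hmerge x y).1, ?_⟩
      show (merge x y).tail.get 0 = y.get 0
      rw [(hmerge x y).2]
      exact (hmerge y x.tail).1
    | succ n ih =>
      intro x y
      have e1 : 2*(n+1) = (2*n+1)+1 := by ring
      have e2 : 2*(n+1)+1 = (2*(n+1))+1 := rfl
      constructor
      · rw [e1]
        show (merge x y).tail.get (2*n+1) = x.get (n+1)
        rw [(hmerge x y).2, (ih y x.tail).2]
        rfl
      · show (merge x y).tail.get (2*(n+1)) = y.get (n+1)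
        rw [(hmerge x y).2]
        show (merge y x.tail).tail.get (2*n+1) = y.get (n+1)
        rw [(hmerge y x.tail).2, (ih x.tail y.tail).2]
        rfl
  have h1 : ∀ k, t.get (2*k+1) = t.get k := by
    intro k
    show t.tail.get (2*k) = t.get k
    rw [ht.2]
    exact (mget k t (notS t)).1
  have h2 : ∀ k, t.get (2*k+2) = !t.get k := by
    intro k
    show t.tail.get (2*k+1) = !t.get k
    rw [ht.2, (mget k t (notS t)).2, nget]
  -- main non-periodicity argument
  have key : ∀ p, 1 ≤ p → ∀ N, ¬ ∀ n, N ≤ n → t.get (n + p) = t.get n := by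
    intro p
    induction p using Nat.strong_induction_on with
    | _ p ih =>
      intro hp N hper
      rcases Nat.even_or_odd p with ⟨q, hq⟩ | ⟨q, hq⟩
      · -- p = q + q, reduce to period q
        have hq1 : 1 ≤ q := by omega
        refine ih q (by omega) hq1 N ?_
        intro n hn
        have h := hper (2*n+1) (by omega)
        have e1 : 2*n+1+p = 2*(n+q)+1 := by omega
        rw [e1, h1 (n+q), h1 n] at h
        exact h
      · -- p = 2q+1
        have hA : ∀ n, N ≤ n → t.get (n+q) = !t.get n := by
          intro n hn
          have h := hper (2*n+1) (by omega)
          have e1 : 2*n+1+p = 2*(n+q)+2 := by omega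
          rw [e1, h2 (n+q), h1 n] at h
          cases hb : t.get n <;> simp [hb] at h ⊢ <;> simp [h]
        have hB : ∀ n, N ≤ n → t.get (n+q+1) = !t.get n := by
          intro n hn
          have h := hper (2*n+2) (by omega)
          have e1 : 2*n+2+p = 2*(n+q+1)+1 := by omega
          rw [e1, h1 (n+q+1), h2 n] at h
          exact h
        have hC : ∀ m, N+q ≤ m → t.get (m+1) = t.get m := by
          intro m hm
          have hn : N ≤ m - q := by omega
          have e : m = (m-q) + q := by omega
          rw [e]
          rw [hB (m-q) hn, hA (m-q) hn]
        have c1 := hC (2*(N+q)+1) (by omega)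
        rw [h1 (N+q)] at c1
        have e : 2*(N+q)+1+1 = 2*(N+q)+2 := rfl
        rw [e, h2 (N+q)] at c1
        cases t.get (N+q) <;> simp_all
  constructor
  · rintro ⟨N, p, hp, hper⟩
    exact key p hp N hper
  · intro Q instQ g₀ g₁ f hf q₀ heq
    have fget : ∀ n q, (f q).get n = g₀ (g₁^[n] q) := by
      intro n
      induction n with
      | zero => intro q; exact (hf q).1
      | succ n ih =>
        intro q
        show (f q).tail.get n = _
        rw [(hf q).2, ih, Function.iterate_succ_apply]
    haveI : Finite Q := Finite.of_fintype Q
    obtain ⟨i, j, hne, hij⟩ :=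
      Finite.exists_ne_map_eq_of_infinite (fun n : ℕ => g₁^[n] q₀)
    -- wlog i < j
    rcases hne.lt_or_gt with hlt | hlt
    case _ =>
      refine key (j - i) (by omega) i ?_
      intro n hn
      have e1 : n + (j - i) = (n - i) + j := by omega
      have e2 : n = (n - i) + i := by omega
      rw [← heq, fget, fget, e1, Function.iterate_add_apply]
      conv_rhs => rw [e2, Function.iterate_add_apply]
      have hij' : g₁^[i] q₀ = g₁^[j] q₀ := hij
      rw [hij']
    case _ =>
      refine key (i - j) (by omega) j ?_
      intro n hn
      have e1 : n + (i - j) = (n - j) + i := by omega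
      have e2 : n = (n - j) + j := by omega
      rw [← heq, fget, fget, e1, Function.iterate_add_apply]
      conv_rhs => rw [e2, Function.iterate_add_apply]
      have hij' : g₁^[i] q₀ = g₁^[j] q₀ := hij
      rw [hij']
end
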